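/- Let n be a positive integer, B a symmetric n×n real matrix, g ∈ ℝⁿ, and δ > 0. Suppose p* ∈ ℝⁿ satisfies ‖p*‖₂ ≤ δ and there exists σ* ≥ 0 such that B + σ*I is positive semidefinite, (B + σ*I)p* = -g, and σ*(δ - ‖p*‖₂) = 0. Then p* is a global minimizer of q(p) = gᵀp + (1/2)pᵀBp over the set {p ∈ ℝⁿ : ‖p‖₂ ≤ δ} (sufficiency direction of the Moré–Sorensen optimality conditions). -/

import Mathlib

open Matrix

/-!
With `A = B + σI`, the hypotheses say that `p⋆` is a stationary point of the convex quadratic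
`q_A(p) = gᵀp + ½pᵀAp`, hence its global minimizer: `q_A(p) - q_A(p⋆) = ½(p - p⋆)ᵀA(p - p⋆) ≥ 0`.
Since `q = q_A - (σ/2)‖·‖²`, it remains to see `σ‖p‖² ≤ σ‖p⋆‖²` on the ball, which is
complementary slackness: either `σ = 0` or `‖p⋆‖ = δ`.
-/

namespace Matrix

variable {ι : Type*} [Fintype ι]

noncomputable def quadModel (A : Matrix ι ι ℝ) (g x : ι → ℝ) : ℝ :=
  g ⬝ᵥ x + 1 / 2 * (x ⬝ᵥ A *ᵥ x)

theorem quadModel_add_smul_one [DecidableEq ι] (A : Matrix ι ι ℝ) (σ : ℝ) (g x : ι → ℝ) :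
    quadModel (A + σ • 1) g x = quadModel A g x + σ / 2 * (x ⬝ᵥ x) := by
  simp only [quadModel, add_mulVec, smul_mulVec, one_mulVec, dotProduct_add, dotProduct_smul,
    smul_eq_mul]
  ring

theorem quadModel_sub_quadModel_of_mulVec_eq_neg {A : Matrix ι ι ℝ} (hA : A.IsSymm)
    {g x : ι → ℝ} (hx : A *ᵥ x = -g) (y : ι → ℝ) :
    quadModel A g y - quadModel A g x = 1 / 2 * ((y - x) ⬝ᵥ A *ᵥ (y - x)) := by
  have hsymm (u v : ι → ℝ) : u ⬝ᵥ A *ᵥ v = v ⬝ᵥ A *ᵥ u := by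
    rw [dotProduct_mulVec, ← mulVec_transpose, hA, dotProduct_comm]
  have hg (u : ι → ℝ) : g ⬝ᵥ u = -(u ⬝ᵥ A *ᵥ x) := by
    rw [← neg_neg g, ← hx, neg_dotProduct, dotProduct_comm]
  simp only [quadModel, hg, mulVec_sub, dotProduct_sub, sub_dotProduct, hsymm x y]
  ring

theorem quadModel_le_of_posSemidef {A : Matrix ι ι ℝ} (hA : A.PosSemidef)
    {g x : ι → ℝ} (hx : A *ᵥ x = -g) (y : ι → ℝ) :
    quadModel A g x ≤ quadModel A g y := by
  have h :=
    quadModel_sub_quadModel_of_mulVec_eq_neg (isHermitian_iff_isSymm.mp hA.isHermitian) hx y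
  have hnonneg : 0 ≤ (y - x) ⬝ᵥ A *ᵥ (y - x) := by
    simpa using hA.dotProduct_mulVec_nonneg (y - x)
  linarith

end Matrix

theorem EuclideanSpace.dotProduct_self_eq_norm_sq {ι : Type*} [Fintype ι]
    (x : EuclideanSpace ℝ ι) : x.ofLp ⬝ᵥ x.ofLp = ‖x‖ ^ 2 := by
  rw [← real_inner_self_eq_norm_sq, EuclideanSpace.inner_eq_star_dotProduct, star_trivial]

theorem mss_stmt0 (n : ℕ)
    (B : Matrix (Fin n) (Fin n) ℝ)
    (g : EuclideanSpace ℝ (Fin n)) (δ : ℝ)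
    (pstar : EuclideanSpace ℝ (Fin n)) (σ : ℝ) (hσ : 0 ≤ σ)
    (hpsd : (B + σ • 1).PosSemidef)
    (heq : (B + σ • 1).mulVec pstar = -g)
    (hcomp : σ * (δ - ‖pstar‖) = 0) :
    ∀ p : EuclideanSpace ℝ (Fin n), ‖p‖ ≤ δ →
      g ⬝ᵥ pstar + (1 / 2) * (pstar ⬝ᵥ B.mulVec pstar) ≤
        g ⬝ᵥ p + (1 / 2) * (p ⬝ᵥ B.mulVec p) := by
  intro p hp
  have hshifted := quadModel_le_of_posSemidef hpsd heq p
  rw [quadModel_add_smul_one, quadModel_add_smul_one,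
    EuclideanSpace.dotProduct_self_eq_norm_sq, EuclideanSpace.dotProduct_self_eq_norm_sq]
    at hshifted
  have hslack : σ * ‖p‖ ^ 2 ≤ σ * ‖pstar‖ ^ 2 := by
    rcases mul_eq_zero.mp hcomp with rfl | hboundary
    · simp
    · rw [← sub_eq_zero.mp hboundary]
      exact mul_le_mul_of_nonneg_left (pow_le_pow_left₀ (norm_nonneg p) hp 2) hσ
  unfold quadModel at hshifted
  linarith
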